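/- arXiv:math/0702873 — 2 statements merged into one kernel-verified Lean document; each statement's English description precedes it below -/
import Mathlib

section
/- Let G be a 2-connected, locally finite, infinite graph. Then every finite subgraph H of G is contained in some finite 2-connected subgraph H' of G. -/
/-- A graph is 2-connected if it is connected, has at least 3 vertices, and
remains connected after deleting any single vertex. -/
def TwoConnected {V : Type*} (G : SimpleGraph V) : Prop :=
  G.Connected ∧ (∃ x y z : V, x ≠ y ∧ y ≠ z ∧ x ≠ z) ∧
    ∀ v : V, ((⊤ : G.Subgraph).deleteVerts {v}).coe.Connected

/-! Enlarge the given vertex set to a finite set `C` that induces a connected subgraph and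
contains three vertices, then add, for all `u v w ∈ C`, a `u`–`v` path avoiding `w`. After
deleting a vertex `w` from the resulting set `U`, the rest of `C` is still joined, by the paths
avoiding `w` if `w ∈ C` and through `C` itself otherwise; every other vertex lies on one of the
added paths, and one of its two halves avoids `w` and leads back into `C`. The
subgraph induced on `U` is the required one. -/

namespace SimpleGraph

variable {V : Type*} {G : SimpleGraph V}

theorem Walk.reachable_induce {u v : V} (p : G.Walk u v) {W : Set V}
    (h : ∀ x ∈ p.support, x ∈ W) :
    (G.induce W).Reachable ⟨u, h u p.start_mem_support⟩ ⟨v, h v p.end_mem_support⟩ :=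
  (p.connected_induce_support.preconnected ⟨u, p.start_mem_support⟩
    ⟨v, p.end_mem_support⟩).map (induceHomOfLE G h).toHom

theorem Walk.IsPath.exists_walk_to_endpoint_avoiding {u v x w : V} {p : G.Walk u v}
    (hp : p.IsPath) (hx : x ∈ p.support) (hxw : x ≠ w) :
    ∃ s, (s = u ∨ s = v) ∧ ∃ q : G.Walk x s, w ∉ q.support ∧ q.support ⊆ p.support := by
  classical
  by_cases hw : w ∈ (p.takeUntil x hx).support
  · refine ⟨v, Or.inr rfl, p.dropUntil x hx, fun hw' => ?_, p.support_dropUntil_subset_support hx⟩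
    have hnodup := hp.support_nodup
    rw [← p.take_spec hx, support_append] at hnodup
    rw [← cons_tail_support, List.mem_cons] at hw'
    exact hw'.elim (fun h => hxw h.symm) (List.disjoint_of_nodup_append hnodup hw)
  · refine ⟨u, Or.inl rfl, (p.takeUntil x hx).reverse, by simpa using hw, ?_⟩
    rw [support_reverse]
    exact fun y hy => p.support_takeUntil_subset_support hx (List.mem_reverse.1 hy)

theorem connected_induce_sdiff_of_paths {C U : Set V} {w : V} (hCU : C ⊆ U)
    (hC : (G.induce C).Connected) (hCw : (C \ {w}).Nonempty)
    (havoid : w ∈ C → ∀ s ∈ C, ∀ t ∈ C, s ≠ w → t ≠ w →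
      ∃ p : G.Walk s t, w ∉ p.support ∧ ∀ y ∈ p.support, y ∈ U)
    (hcover : ∀ x ∈ U, x ∈ C ∨ ∃ u ∈ C, ∃ v ∈ C, ∃ p : G.Walk u v,
      p.IsPath ∧ x ∈ p.support ∧ ∀ y ∈ p.support, y ∈ U) :
    (G.induce (U \ {w})).Connected := by
  have reach_core : ∀ s (hs : s ∈ C) (hsw : s ≠ w) t (ht : t ∈ C) (htw : t ≠ w),
      (G.induce (U \ {w})).Reachable ⟨s, hCU hs, hsw⟩ ⟨t, hCU ht, htw⟩ := by
    intro s hs hsw t ht htw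
    by_cases hwC : w ∈ C
    · obtain ⟨p, hpw, hpU⟩ := havoid hwC s hs t ht hsw htw
      exact p.reachable_induce (W := U \ {w}) fun y hy => ⟨hpU y hy, fun h => hpw (h ▸ hy)⟩
    · exact (hC ⟨s, hs⟩ ⟨t, ht⟩).map
        (induceHomOfLE G (s' := U \ {w}) fun y hy => ⟨hCU hy, fun h => hwC (h ▸ hy)⟩).toHom
  have reach_of_core : ∀ x : ↥(U \ {w}), ∃ s, ∃ (hs : s ∈ C) (hsw : s ≠ w),
      (G.induce (U \ {w})).Reachable x ⟨s, hCU hs, hsw⟩ := by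
    rintro ⟨x, hxU, hxw⟩
    rcases hcover x hxU with hxC | ⟨u, hu, v, hv, p, hp, hxp, hpU⟩
    · exact ⟨x, hxC, hxw, .refl _⟩
    · obtain ⟨s, hs, q, hqw, hqp⟩ := hp.exists_walk_to_endpoint_avoiding hxp hxw
      exact ⟨s, hs.elim (· ▸ hu) (· ▸ hv), fun h => hqw (h ▸ q.end_mem_support),
        q.reachable_induce (W := U \ {w}) fun y hy => ⟨hpU y (hqp hy), fun h => hqw (h ▸ hy)⟩⟩
  obtain ⟨c, hcC, hcw⟩ := hCw
  refine (connected_iff _).2 ⟨fun a b => ?_, ⟨⟨c, hCU hcC, hcw⟩⟩⟩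
  obtain ⟨s, hs, hsw, has⟩ := reach_of_core a
  obtain ⟨t, ht, htw, hbt⟩ := reach_of_core b
  exact (has.trans (reach_core s hs hsw t ht htw)).trans hbt.symm

end SimpleGraph

open SimpleGraph

section TwoConnected

variable {V : Type*} {G : SimpleGraph V}

theorem twoConnected_induce_of_connected_induce_sdiff {U : Set V} {x y z : V}
    (hx : x ∈ U) (hy : y ∈ U) (hz : z ∈ U) (hxy : x ≠ y) (hyz : y ≠ z) (hxz : x ≠ z)
    (hdel : ∀ v ∈ U, (G.induce (U \ {v})).Connected) : TwoConnected (G.induce U) := by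
  refine ⟨?_, ⟨⟨x, hx⟩, ⟨y, hy⟩, ⟨z, hz⟩, by simpa, by simpa, by simpa⟩, fun v => ?_⟩
  · have hU : U \ {x} ∪ U \ {y} = U := by
      rw [← Set.sdiff_inter, Set.singleton_inter_eq_empty.2 (Set.mem_singleton_iff.not.2 hxy),
        Set.sdiff_empty]
    have := induce_union_connected (hdel x hx).preconnected (hdel y hy).preconnected
      ⟨z, ⟨hz, hxz.symm⟩, ⟨hz, hyz.symm⟩⟩
    rwa [hU] at this
  · let f : G.induce (U \ {(v : V)}) →g ((⊤ : (G.induce U).Subgraph).deleteVerts {v}).coe :=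
      { toFun := fun a => ⟨⟨a, a.2.1⟩, trivial, fun h => a.2.2 (congrArg Subtype.val h)⟩
        map_rel' := fun {a b} h => by
          simpa [Subtype.ext_iff] using ⟨a.2.2, b.2.2, h⟩ }
    exact (hdel v v.2).map f fun b => ⟨⟨b.1.1, b.1.2, fun h => b.2.2 (Subtype.ext h)⟩, rfl⟩

theorem TwoConnected.exists_isPath_avoiding (h : TwoConnected G) {u v w : V} (hu : u ≠ w)
    (hv : v ≠ w) : ∃ p : G.Walk u v, p.IsPath ∧ w ∉ p.support := by
  classical
  obtain ⟨p, hp⟩ := (Subgraph.preconnected_iff_forall_exists_walk_subgraph _).1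
    (Subgraph.preconnected_iff.2 (h.2.2 w).preconnected)
    (show u ∈ ((⊤ : G.Subgraph).deleteVerts {w}).verts by simpa using hu)
    (show v ∈ ((⊤ : G.Subgraph).deleteVerts {w}).verts by simpa using hv)
  refine ⟨p.bypass, p.bypass_isPath, fun hw => ?_⟩
  have := Subgraph.verts_mono hp
    ((p.mem_verts_toSubgraph).2 (p.support_bypass_subset_support hw))
  simp at this

theorem TwoConnected.exists_finite_superset_twoConnected_induce (h : TwoConnected G)
    {S : Set V} (hS : S.Finite) : ∃ U, S ⊆ U ∧ U.Finite ∧ TwoConnected (G.induce U) := by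
  classical
  obtain ⟨x, y, z, hxy, hyz, hxz⟩ := h.2.1
  obtain ⟨C, hSC, hC⟩ := extend_finset_to_connected h.1.preconnected
    (t := insert x (insert y (insert z hS.toFinset))) (Finset.insert_nonempty _ _)
  have hxC : x ∈ C := hSC (by simp)
  have hyC : y ∈ C := hSC (by simp)
  have hzC : z ∈ C := hSC (by simp)
  choose q hq using fun u v w (huw : u ≠ w) (hvw : v ≠ w) => h.exists_isPath_avoiding huw hvw
  let U : Set V := C ∪ ⋃ u ∈ C, ⋃ v ∈ C, ⋃ w ∈ C, ⋃ (huw : u ≠ w) (hvw : v ≠ w),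
    {a | a ∈ (q u v w huw hvw).support}
  have hCU : (C : Set V) ⊆ U := Set.subset_union_left
  have hqU : ∀ u ∈ C, ∀ v ∈ C, ∀ w ∈ C, ∀ (huw : u ≠ w) (hvw : v ≠ w),
      ∀ a ∈ (q u v w huw hvw).support, a ∈ U := fun u hu v hv w hw huw hvw a ha =>
    Or.inr (Set.mem_biUnion hu (Set.mem_biUnion hv (Set.mem_biUnion hw
      (Set.mem_iUnion_of_mem huw (Set.mem_iUnion_of_mem hvw ha)))))
  refine ⟨U, fun a ha => hCU (hSC (by simp [ha])), ?_, ?_⟩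
  · have hCfin := C.finite_toSet
    exact hCfin.union <| hCfin.biUnion fun u _ => hCfin.biUnion fun v _ => hCfin.biUnion
      fun w _ => Set.finite_iUnion fun huw => Set.finite_iUnion fun hvw =>
        (q u v w huw hvw).support.finite_toSet
  refine twoConnected_induce_of_connected_induce_sdiff (hCU hxC) (hCU hyC) (hCU hzC)
    hxy hyz hxz fun w _ => ?_
  refine connected_induce_sdiff_of_paths hCU hC ?_ ?_ ?_
  · by_cases hxw : x = w
    · exact ⟨y, hyC, fun h => hxy (hxw.trans h.symm)⟩
    · exact ⟨x, hxC, hxw⟩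
  · exact fun hw s hs t ht hsw htw =>
      ⟨q s t w hsw htw, (hq s t w hsw htw).2, hqU s hs t ht w hw hsw htw⟩
  · rintro a (haC | ha)
    · exact Or.inl haC
    simp only [Set.mem_iUnion] at ha
    obtain ⟨u, hu, v, hv, w, hw, huw, hvw, ha⟩ := ha
    exact Or.inr ⟨u, hu, v, hv, q u v w huw hvw, (hq u v w huw hvw).1, ha,
      hqU u hu v hv w hw huw hvw⟩

end TwoConnected

theorem stmt0_general {V : Type*} (G : SimpleGraph V)
    (h2 : TwoConnected G) (H : G.Subgraph) (hHv : H.verts.Finite) :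
    ∃ H' : G.Subgraph, H'.verts.Finite ∧ H ≤ H' ∧ TwoConnected H'.coe := by
  obtain ⟨U, hHU, hUfin, hU⟩ := h2.exists_finite_superset_twoConnected_induce hHv
  refine ⟨(⊤ : G.Subgraph).induce U, hUfin,
    Subgraph.le_induce_top_verts.trans (Subgraph.induce_mono_right hHU), ?_⟩
  rwa [← induce_eq_coe_induce_top]

/-- Every finite subgraph of a 2-connected, locally finite, infinite graph is contained
in a finite 2-connected subgraph. -/
theorem stmt0 {V : Type*} (G : SimpleGraph V) [G.LocallyFinite] [Infinite V]
    (h2 : TwoConnected G) (H : G.Subgraph) (hHv : H.verts.Finite) :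
    ∃ H' : G.Subgraph, H'.verts.Finite ∧ H ≤ H' ∧ TwoConnected H'.coe :=
  stmt0_general G h2 H hHv
end

section
/- Let H be a graph in which every vertex has the same degree k ≥ 1 and which has at least one edge. If H has a connected component containing a self-avoiding path of length 8 with consecutive edges e₁,…,e₈, and if for every path of this form the endpoint pairs {endpoints of e₃} ∪ {endpoints of e₆} span an additional edge f₂ (distinct from e₃,…,e₆) and {endpoints of e₁} ∪ {endpoints of e₈} span an additional edge f₁, then H contains two vertices x and y joined by three pairwise internally disjoint paths. -/
/-!
The path `v₀ ⋯ v₈` together with `f₁` closes a cycle on which the endpoints `v_a`, `v_b` of `f₂`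
(`a ∈ {2, 3}`, `b ∈ {5, 6}`) are not consecutive, so `f₂` is a chord of that cycle. A cycle with a
chord consists of three internally disjoint paths between the ends of the chord: the chord itself
and the two arcs of the cycle.
-/

/-- Two vertices joined by three pairwise distinct, pairwise internally disjoint paths. -/
def ThreeDisjointPaths {V : Type*} (G : SimpleGraph V) : Prop :=
  ∃ (x y : V), x ≠ y ∧ ∃ (p₁ p₂ p₃ : G.Walk x y),
    p₁.IsPath ∧ p₂.IsPath ∧ p₃.IsPath ∧ p₁ ≠ p₂ ∧ p₁ ≠ p₃ ∧ p₂ ≠ p₃ ∧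
    (∀ v : V, v ∈ p₁.support → v ∈ p₂.support → v = x ∨ v = y) ∧
    (∀ v : V, v ∈ p₁.support → v ∈ p₃.support → v = x ∨ v = y) ∧
    (∀ v : V, v ∈ p₂.support → v ∈ p₃.support → v = x ∨ v = y)

/-- A self-avoiding path of length 8 in `G`, recorded by its 9 distinct consecutive
vertices `v 0, …, v 8`. -/
def IsSAP8 {V : Type*} (G : SimpleGraph V) (v : ℕ → V) : Prop :=
  (∀ i < 8, G.Adj (v i) (v (i + 1))) ∧
  (∀ i ≤ 8, ∀ j ≤ 8, v i = v j → i = j)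

namespace SimpleGraph

variable {V : Type*} {G : SimpleGraph V}

section Supports

variable {α : Type*} {f : α → V} {s : Set α} {x y x' y' : V}

theorem isPath_of_support_eq_map (hf : Set.InjOn f s) {p : G.Walk x y} {I : List α}
    (hI : I.Nodup) (hIs : ∀ t ∈ I, t ∈ s) (hp : p.support = I.map f) : p.IsPath := by
  rw [Walk.isPath_def, hp]
  exact hI.map_on fun t ht t' ht' => hf (hIs t ht) (hIs t' ht')

theorem eq_or_eq_of_mem_supports_of_support_eq_map (hf : Set.InjOn f s)
    {p : G.Walk x y} {q : G.Walk x' y'} {I J : List α}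
    (hIs : ∀ t ∈ I, t ∈ s) (hJs : ∀ t ∈ J, t ∈ s)
    (hp : p.support = I.map f) (hq : q.support = J.map f) {a b : α}
    (hIJ : ∀ t ∈ I, t ∈ J → t = a ∨ t = b) :
    ∀ w ∈ p.support, w ∈ q.support → w = f a ∨ w = f b := by
  rw [hp, hq]
  rintro _ hwI hwJ
  obtain ⟨t, ht, rfl⟩ := List.mem_map.mp hwI
  obtain ⟨t', ht', htt'⟩ := List.mem_map.mp hwJ
  obtain rfl := hf (hJs t' ht') (hIs t ht) htt'
  rcases hIJ t' ht ht' with rfl | rfl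
  exacts [Or.inl rfl, Or.inr rfl]

end Supports

section SeqWalk

variable {v : ℕ → V} {n : ℕ}

def seqWalkOfLength (hadj : ∀ i < n, G.Adj (v i) (v (i + 1))) (i : ℕ) :
    (m : ℕ) → i + m ≤ n → G.Walk (v i) (v (i + m))
  | 0, _ => Walk.nil
  | m + 1, h => (seqWalkOfLength hadj i m (by omega)).concat (hadj (i + m) (by omega))

theorem support_seqWalkOfLength (hadj : ∀ i < n, G.Adj (v i) (v (i + 1))) (i : ℕ) :
    ∀ (m : ℕ) (h : i + m ≤ n),
      (seqWalkOfLength hadj i m h).support = (List.range' i (m + 1)).map v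
  | 0, _ => by simp [seqWalkOfLength]
  | m + 1, h => by
    rw [seqWalkOfLength, Walk.support_concat, support_seqWalkOfLength hadj i m (by omega),
      List.range'_1_concat (n := m + 1), List.map_append]
    rfl

theorem length_seqWalkOfLength (hadj : ∀ i < n, G.Adj (v i) (v (i + 1))) (i : ℕ) :
    ∀ (m : ℕ) (h : i + m ≤ n), (seqWalkOfLength hadj i m h).length = m
  | 0, _ => rfl
  | m + 1, h => by
    rw [seqWalkOfLength, Walk.length_concat, length_seqWalkOfLength hadj i m (by omega)]

def seqWalk (hadj : ∀ i < n, G.Adj (v i) (v (i + 1))) (i j : ℕ) (hij : i ≤ j) (hj : j ≤ n) :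
    G.Walk (v i) (v j) :=
  (seqWalkOfLength hadj i (j - i) (by omega)).copy rfl (by congr 1; omega)

theorem support_seqWalk (hadj : ∀ i < n, G.Adj (v i) (v (i + 1))) (i j : ℕ)
    (hij : i ≤ j) (hj : j ≤ n) :
    (seqWalk hadj i j hij hj).support = (List.range' i (j - i + 1)).map v := by
  rw [seqWalk, Walk.support_copy, support_seqWalkOfLength]

theorem length_seqWalk (hadj : ∀ i < n, G.Adj (v i) (v (i + 1))) (i j : ℕ)
    (hij : i ≤ j) (hj : j ≤ n) : (seqWalk hadj i j hij hj).length = j - i := by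
  rw [seqWalk, Walk.length_copy, length_seqWalkOfLength]

theorem isPath_seqWalk (hadj : ∀ i < n, G.Adj (v i) (v (i + 1))) (hinj : Set.InjOn v (Set.Iic n))
    (i j : ℕ) (hij : i ≤ j) (hj : j ≤ n) : (seqWalk hadj i j hij hj).IsPath :=
  isPath_of_support_eq_map hinj List.nodup_range'
    (fun t ht => by rw [List.mem_range'_1] at ht; rw [Set.mem_Iic]; omega) (support_seqWalk ..)

/-- The walk `v a, …, v c, v d, …, v b`: from `v a` to `v b` the other way round the cycle
closed by the edge `v c v d`. -/
def seqWalkAround (hadj : ∀ i < n, G.Adj (v i) (v (i + 1))) {a b c d : ℕ}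
    (hclose : G.Adj (v c) (v d)) (hca : c ≤ a) (han : a ≤ n) (hbd : b ≤ d) (hdn : d ≤ n) :
    G.Walk (v a) (v b) :=
  (seqWalk hadj c a hca han).reverse.append (Walk.cons hclose (seqWalk hadj b d hbd hdn).reverse)

variable (hadj : ∀ i < n, G.Adj (v i) (v (i + 1))) {a b c d : ℕ} (hclose : G.Adj (v c) (v d))
  (hca : c ≤ a) (han : a ≤ n) (hbd : b ≤ d) (hdn : d ≤ n)

theorem support_seqWalkAround : (seqWalkAround hadj hclose hca han hbd hdn).support =
    ((List.range' c (a - c + 1)).reverse ++ (List.range' b (d - b + 1)).reverse).map v := by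
  simp [seqWalkAround, Walk.support_append, Walk.support_reverse, support_seqWalk,
    List.map_reverse]

theorem length_seqWalkAround :
    (seqWalkAround hadj hclose hca han hbd hdn).length = a - c + (d - b) + 1 := by
  simp only [seqWalkAround, Walk.length_append, Walk.length_reverse, Walk.length_cons,
    length_seqWalk]
  omega

theorem isPath_seqWalkAround (hinj : Set.InjOn v (Set.Iic n)) (hab : a < b) :
    (seqWalkAround hadj hclose hca han hbd hdn).IsPath := by
  refine isPath_of_support_eq_map hinj ?_ (fun t ht => ?_) (support_seqWalkAround ..)
  · refine List.nodup_append.mpr ⟨List.nodup_reverse.mpr List.nodup_range',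
      List.nodup_reverse.mpr List.nodup_range', fun t ht t' ht' => ?_⟩
    simp only [List.mem_reverse, List.mem_range'_1] at ht ht'
    omega
  · simp only [List.mem_append, List.mem_reverse, List.mem_range'_1] at ht
    rw [Set.mem_Iic]
    omega

end SeqWalk

theorem Walk.IsPath.ne_of_support_inter {x y : V} {p q : G.Walk x y} (hp : p.IsPath)
    (hlen : 2 ≤ p.length) (hpq : ∀ w ∈ p.support, w ∈ q.support → w = x ∨ w = y) :
    p ≠ q := by
  rintro rfl
  have hsub : p.support ⊆ [x, y] := fun w hw => by simpa using hpq w hw hw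
  have := (hp.support_nodup.subperm hsub).length_le
  simp only [Walk.length_support, List.length_cons, List.length_nil] at this
  omega

theorem threeDisjointPaths_of_isPath {x y : V} (hxy : x ≠ y) {p₁ p₂ p₃ : G.Walk x y}
    (hp₁ : p₁.IsPath) (hp₂ : p₂.IsPath) (hp₃ : p₃.IsPath)
    (hlen₁ : 2 ≤ p₁.length) (hlen₃ : 2 ≤ p₃.length)
    (h₁₂ : ∀ w ∈ p₁.support, w ∈ p₂.support → w = x ∨ w = y)
    (h₁₃ : ∀ w ∈ p₁.support, w ∈ p₃.support → w = x ∨ w = y)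
    (h₂₃ : ∀ w ∈ p₂.support, w ∈ p₃.support → w = x ∨ w = y) :
    ThreeDisjointPaths G :=
  ⟨x, y, hxy, p₁, p₂, p₃, hp₁, hp₂, hp₃, hp₁.ne_of_support_inter hlen₁ h₁₂,
    hp₁.ne_of_support_inter hlen₁ h₁₃,
    (hp₃.ne_of_support_inter hlen₃ fun w h₃ h₂ => h₂₃ w h₂ h₃).symm,
    h₁₂, h₁₃, h₂₃⟩

theorem threeDisjointPaths_of_crossing_chords {v : ℕ → V} {n : ℕ}
    (hadj : ∀ i < n, G.Adj (v i) (v (i + 1))) (hinj : Set.InjOn v (Set.Iic n))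
    {a b c d : ℕ} (hca : c < a) (hab : a + 2 ≤ b) (hbd : b < d) (hdn : d ≤ n)
    (hchord : G.Adj (v a) (v b)) (hclose : G.Adj (v c) (v d)) :
    ThreeDisjointPaths G := by
  let I₁ := List.range' a (b - a + 1)
  let I₃ := (List.range' c (a - c + 1)).reverse ++ (List.range' b (d - b + 1)).reverse
  have hI₁ : ∀ t ∈ I₁, a ≤ t ∧ t ≤ b := fun t ht => by
    simp only [I₁, List.mem_range'_1] at ht; omega
  have hI₃ : ∀ t ∈ I₃, c ≤ t ∧ t ≤ a ∨ b ≤ t ∧ t ≤ d := fun t ht => by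
    simp only [I₃, List.mem_append, List.mem_reverse, List.mem_range'_1] at ht; omega
  have hI₁n : ∀ t ∈ I₁, t ∈ Set.Iic n := fun t ht => by
    have := hI₁ t ht; rw [Set.mem_Iic]; omega
  have hI₂n : ∀ t ∈ [a, b], t ∈ Set.Iic n := by
    simp only [List.mem_cons, List.not_mem_nil, or_false, Set.mem_Iic]; omega
  have hI₃n : ∀ t ∈ I₃, t ∈ Set.Iic n := fun t ht => by
    have := hI₃ t ht; rw [Set.mem_Iic]; omega
  have hs₁ := support_seqWalk hadj a b (by omega) (by omega)
  have hs₂ : hchord.toWalk.support = [a, b].map v := rfl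
  have hs₃ := support_seqWalkAround hadj hclose hca.le (by omega) hbd.le hdn
  refine threeDisjointPaths_of_isPath (hinj.ne (hI₂n a (by simp)) (hI₂n b (by simp)) (by omega))
    (isPath_seqWalk hadj hinj a b _ _) hchord.isPath_toWalk
    (isPath_seqWalkAround hadj hclose hca.le _ hbd.le hdn hinj (by omega))
    (by rw [length_seqWalk]; omega) (by rw [length_seqWalkAround]; omega)
    (eq_or_eq_of_mem_supports_of_support_eq_map hinj hI₁n hI₂n hs₁ hs₂ fun t _ ht => by
      simpa using ht)
    (eq_or_eq_of_mem_supports_of_support_eq_map hinj hI₁n hI₃n hs₁ hs₃ fun t ht ht' => by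
      have := hI₁ t ht; have := hI₃ t ht'; omega)
    (eq_or_eq_of_mem_supports_of_support_eq_map hinj hI₂n hI₃n hs₂ hs₃ fun t ht _ => by
      simpa using ht)

end SimpleGraph

theorem stmt13_general {V : Type*} (H : SimpleGraph V)
    (hpath : ∃ v : ℕ → V, IsSAP8 H v)
    (hf₂ : ∀ v : ℕ → V, IsSAP8 H v →
      ∃ a b : V, (a = v 2 ∨ a = v 3) ∧ (b = v 5 ∨ b = v 6) ∧ H.Adj a b ∧
        ∀ i < 8, s(a, b) ≠ s(v i, v (i + 1)))
    (hf₁ : ∀ v : ℕ → V, IsSAP8 H v →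
      ∃ a b : V, (a = v 0 ∨ a = v 1) ∧ (b = v 7 ∨ b = v 8) ∧ H.Adj a b ∧
        ∀ i < 8, s(a, b) ≠ s(v i, v (i + 1))) :
    ThreeDisjointPaths H := by
  obtain ⟨v, hv⟩ := hpath
  obtain ⟨a, b, ha, hb, hab, -⟩ := hf₂ v hv
  obtain ⟨c, d, hc, hd, hcd, -⟩ := hf₁ v hv
  have hinj : Set.InjOn v (Set.Iic 8) := fun i hi j hj => hv.2 i hi j hj
  rcases ha with rfl | rfl <;> rcases hb with rfl | rfl <;>
    rcases hc with rfl | rfl <;> rcases hd with rfl | rfl <;>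
    exact SimpleGraph.threeDisjointPaths_of_crossing_chords hv.1 hinj
      (by omega) (by omega) (by omega) (by omega) hab hcd

/-- If H is k-regular (k ≥ 1) with an edge, contains a self-avoiding path of length 8,
and for every such path the endpoints of e₁, e₈ span an additional edge and the
endpoints of e₃, e₆ span an additional edge, then H has two vertices joined by three
internally disjoint paths. -/
theorem stmt13 {V : Type*} (H : SimpleGraph V) [H.LocallyFinite]
    (k : ℕ) (hk : 1 ≤ k) (hreg : ∀ v : V, H.degree v = k)
    (hedge : ∃ a b : V, H.Adj a b)
    (hpath : ∃ v : ℕ → V, IsSAP8 H v)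
    (hf₂ : ∀ v : ℕ → V, IsSAP8 H v →
      ∃ a b : V, (a = v 2 ∨ a = v 3) ∧ (b = v 5 ∨ b = v 6) ∧ H.Adj a b ∧
        ∀ i < 8, s(a, b) ≠ s(v i, v (i + 1)))
    (hf₁ : ∀ v : ℕ → V, IsSAP8 H v →
      ∃ a b : V, (a = v 0 ∨ a = v 1) ∧ (b = v 7 ∨ b = v 8) ∧ H.Adj a b ∧
        ∀ i < 8, s(a, b) ≠ s(v i, v (i + 1))) :
    ThreeDisjointPaths H :=
  stmt13_general H hpath hf₂ hf₁
end
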